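/- arXiv:2403.00203 — 2 statements merged into one kernel-verified Lean document; each statement's English description precedes it below -/
import Mathlib

section
/- Let n ≥ 3 be odd and let a_1, …, a_n be pairwise coprime odd positive integers. Then there exist integers b_1, …, b_n, all of which are odd, satisfying Σ_{i=1}^{n} b_i · ∏_{j≠i} a_j = 1, with b_i > 0 for all i ≥ 2 and b_1 < 0. -/
/-! Write `P i = ∏_{j ≠ i} a j`. For `i ≠ i₀` pick `b i` odd and positive with `b i * P i ≡ 1` mod
`a i` (possible since `a i` is odd and coprime to `P i`). The sum `T` of the `b i * P i` over
`i ≠ i₀` is then `≡ 1` modulo every `a j` with `j ≠ i₀`, hence `1 - T = P i₀ * b i₀` for some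
integer `b i₀`. As `T` is a sum of an even number of positive odd terms, it is even and at
least `2`, so `1 - T` is odd and negative, and so is `b i₀`. -/

open Finset Function

theorem Finset.even_sum_of_odd {ι R : Type*} [Ring R] {s : Finset ι} {f : ι → R}
    (hs : Even #s) (hf : ∀ i ∈ s, Odd (f i)) : Even (∑ i ∈ s, f i) := by
  have hsplit : ∑ i ∈ s, f i = ∑ i ∈ s, (f i - 1) + #s := by
    simp [Finset.sum_sub_distrib]
  rw [hsplit]
  exact (Finset.even_sum _ fun i hi => (hf i hi).sub_odd odd_one).add hs.natCast

theorem Finset.sum_update_mul {ι R : Type*} [Fintype ι] [DecidableEq ι] [AddCommMonoid R] [Mul R]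
    (c g : ι → R) (i₀ : ι) (w : R) :
    ∑ i, update c i₀ w i * g i = w * g i₀ + ∑ i ∈ univ.erase i₀, c i * g i := by
  rw [← add_sum_erase _ _ (mem_univ i₀), update_self]
  congr 1
  exact sum_congr rfl fun i hi => by rw [update_of_ne (ne_of_mem_erase hi)]

-- `v + a * (v + 1)` is odd as `a` is; its residue mod `2 * a` is still odd and `≡ v [ZMOD a]`.
theorem Int.exists_odd_pos_modEq {a : ℤ} (ha : Odd a) (v : ℤ) :
    ∃ c, Odd c ∧ 0 < c ∧ c ≡ v [ZMOD a] := by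
  have ha0 : 2 * a ≠ 0 := by rintro h; simp_all
  have hodd : Odd (v + a * (v + 1)) := by
    obtain ⟨k, rfl⟩ := ha
    exact ⟨v + k * (v + 1), by ring⟩
  have hc : Odd ((v + a * (v + 1)) % (2 * a)) := by
    rw [Int.odd_iff, Int.emod_emod_of_dvd _ (dvd_mul_right 2 a)]
    exact Int.odd_iff.1 hodd
  refine ⟨_, hc, (Int.emod_nonneg _ ha0).lt_of_ne fun h => ?_, ?_⟩
  · rw [← h] at hc
    exact Int.not_odd_zero hc
  calc _ ≡ v + a * (v + 1) [ZMOD a] := (Int.mod_modEq _ _).of_mul_left 2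
    _ ≡ v [ZMOD a] := by simp [Int.ModEq]

theorem Int.exists_odd_pos_mul_modEq_one {a m : ℤ} (ha : Odd a) (h : IsCoprime a m) :
    ∃ c, Odd c ∧ 0 < c ∧ c * m ≡ 1 [ZMOD a] := by
  obtain ⟨u, v, huv⟩ := h
  obtain ⟨c, hodd, hpos, hcv⟩ := exists_odd_pos_modEq ha v
  refine ⟨c, hodd, hpos, ?_⟩
  calc c * m ≡ v * m [ZMOD a] := hcv.mul_right m
    _ = 1 - u * a := by linear_combination huv
    _ ≡ 1 [ZMOD a] := by simp [Int.ModEq]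

section PairwiseCoprime

variable {ι : Type*} [Fintype ι] [DecidableEq ι] {a : ι → ℤ}

theorem isCoprime_prod_erase (hcop : Pairwise (IsCoprime on a)) (i : ι) :
    IsCoprime (a i) (∏ j ∈ univ.erase i, a j) :=
  IsCoprime.prod_right fun _ hj => hcop (ne_of_mem_erase hj).symm

theorem sum_mul_prod_erase_modEq (c : ι → ℤ) {s : Finset ι} {j : ι} (hj : j ∈ s) :
    ∑ i ∈ s, c i * ∏ k ∈ univ.erase i, a k ≡ c j * ∏ k ∈ univ.erase j, a k [ZMOD a j] := by
  have hrest : a j ∣ ∑ i ∈ s.erase j, c i * ∏ k ∈ univ.erase i, a k :=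
    dvd_sum fun i hi => dvd_mul_of_dvd_right
      (dvd_prod_of_mem a (mem_erase.2 ⟨(ne_of_mem_erase hi).symm, mem_univ j⟩)) _
  rw [← add_sum_erase s _ hj]
  simpa using (Int.modEq_zero_iff_dvd.2 hrest).add_left (c j * ∏ k ∈ univ.erase j, a k)

theorem prod_erase_dvd_one_sub_sum (hcop : Pairwise (IsCoprime on a)) (i₀ : ι) {c : ι → ℤ}
    (hc : ∀ i ≠ i₀, c i * ∏ k ∈ univ.erase i, a k ≡ 1 [ZMOD a i]) :
    ∏ k ∈ univ.erase i₀, a k ∣ 1 - ∑ i ∈ univ.erase i₀, c i * ∏ k ∈ univ.erase i, a k :=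
  prod_dvd_of_coprime (fun _ _ _ _ hij => hcop hij) fun j hj =>
    ((sum_mul_prod_erase_modEq c hj).trans (hc j (ne_of_mem_erase hj))).dvd

theorem exists_odd_sum_mul_prod_erase_eq_one (hcard : Odd (Fintype.card ι))
    (hcard₁ : 1 < Fintype.card ι) (hpos : ∀ i, 0 < a i) (hodd : ∀ i, Odd (a i))
    (hcop : Pairwise (IsCoprime on a)) (i₀ : ι) :
    ∃ b : ι → ℤ, (∀ i, Odd (b i)) ∧ ∑ i, b i * ∏ j ∈ univ.erase i, a j = 1 ∧
      (∀ i ≠ i₀, 0 < b i) ∧ b i₀ < 0 := by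
  have hprod_pos (i : ι) : 0 < ∏ j ∈ univ.erase i, a j := prod_pos fun j _ => hpos j
  have hprod_odd (i : ι) : Odd (∏ j ∈ univ.erase i, a j) :=
    prod_induction a Odd (fun _ _ => Odd.mul) odd_one fun j _ => hodd j
  choose c hc_odd hc_pos hc_mod using fun i =>
    Int.exists_odd_pos_mul_modEq_one (hodd i) (isCoprime_prod_erase hcop i)
  set T := ∑ i ∈ univ.erase i₀, c i * ∏ k ∈ univ.erase i, a k
  obtain ⟨w, hw⟩ : ∏ k ∈ univ.erase i₀, a k ∣ 1 - T :=
    prod_erase_dvd_one_sub_sum hcop i₀ fun i _ => hc_mod i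
  have hT_even : Even T := even_sum_of_odd
    (by simpa [card_erase_of_mem] using Nat.Odd.sub_odd hcard odd_one)
    fun i _ => (hc_odd i).mul (hprod_odd i)
  have hT_pos : 0 < T := sum_pos (fun i _ => mul_pos (hc_pos i) (hprod_pos i))
    (card_pos.1 (by simpa [card_erase_of_mem] using hcard₁))
  refine ⟨update c i₀ w, fun i => ?_, ?_, fun i hi => ?_, ?_⟩
  · rcases eq_or_ne i i₀ with rfl | hi
    · rw [update_self]
      exact (Int.odd_mul.1 (hw ▸ odd_one.sub_even hT_even)).2
    · rw [update_of_ne hi]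
      exact hc_odd i
  · rw [sum_update_mul, mul_comm, ← hw]
    ring
  · rw [update_of_ne hi]
    exact hc_pos i
  · rw [update_self]
    have hT_two : 2 ≤ T := by obtain ⟨m, hm⟩ := hT_even; omega
    exact neg_of_mul_neg_right (hw ▸ by omega) (hprod_pos i₀).le

end PairwiseCoprime

/-- For `n ≥ 3` odd and pairwise coprime odd positive integers `a₁, …, aₙ`, there exist
odd integers `b₁, …, bₙ` with `Σᵢ bᵢ · ∏_{j≠i} aⱼ = 1`, `bᵢ > 0` for `i ≥ 2` and `b₁ < 0`. -/
theorem exists_odd_seifert_coefficients (n : ℕ) (hn : 3 ≤ n) (hodd_n : Odd n)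
    (a : Fin n → ℤ) (hpos : ∀ i, 0 < a i) (hodd : ∀ i, Odd (a i))
    (hcop : ∀ i j, i ≠ j → IsCoprime (a i) (a j)) :
    ∃ b : Fin n → ℤ, (∀ i, Odd (b i)) ∧
      (∑ i, b i * ∏ j ∈ Finset.univ.erase i, a j) = 1 ∧
      (∀ i, i ≠ (⟨0, by omega⟩ : Fin n) → 0 < b i) ∧
      b (⟨0, by omega⟩ : Fin n) < 0 :=
  exists_odd_sum_mul_prod_erase_eq_one (by simpa using hodd_n) (by rw [Fintype.card_fin]; omega)
    hpos hodd (fun i j => hcop i j) _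
end

section
/- Let n ≥ 1 and let (a_1, b_1), …, (a_n, b_n) be pairs of coprime integers with all a_i > 0 and with a_{i₀} even for at least one index i₀, and let b be an integer. Then there exist integers k_1, …, k_n such that, setting b_i' = b_i + k_i·a_i and b' = b + Σ_{i=1}^n k_i: (1) b' is even, and (2) for every i at least one of a_i, b_i' is even. -/
/-!
Take `kᵢ = bᵢ`: then `bᵢ + kᵢ aᵢ = bᵢ (1 + aᵢ)` is even whenever `aᵢ` is odd. At an index `i₀`
with `aᵢ₀` even nothing needs to hold, so adding `B + Σ bᵢ` to `kᵢ₀` is free, and it turns the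
new `B` into `2 (B + Σ bᵢ)`.
-/

theorem even_add_mul_self_of_odd {R : Type*} [Semiring R] {a : R} (ha : Odd a) (b : R) :
    Even (b + b * a) := by
  have h : b + b * a = b * (a + 1) := by rw [mul_add, mul_one, add_comm]
  rw [h]
  exact (ha.add_odd odd_one).mul_left b

theorem Fintype.sum_add_pi_single {ι M : Type*} [Fintype ι] [DecidableEq ι] [AddCommMonoid M]
    (f : ι → M) (i : ι) (c : M) : ∑ j, (f + Pi.single i c : ι → M) j = ∑ j, f j + c := by
  simp only [Pi.add_apply, Finset.sum_add_distrib, Finset.sum_pi_single', Finset.mem_univ,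
    if_true]

theorem seifert_even_normalization_general (n : ℕ) (a b : Fin n → ℤ) (B : ℤ)
    (heven : ∃ i, Even (a i)) :
    ∃ k : Fin n → ℤ, Even (B + ∑ i, k i) ∧
      ∀ i, Even (a i) ∨ Even (b i + k i * a i) := by
  obtain ⟨i₀, hi₀⟩ := heven
  set c := B + ∑ i, b i
  refine ⟨b + Pi.single i₀ c, ?_, fun i => ?_⟩
  · rw [Fintype.sum_add_pi_single, ← add_assoc]
    exact ⟨c, rfl⟩
  · rcases (a i).even_or_odd with ha | ha
    · exact Or.inl ha
    · have hi : i ≠ i₀ := by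
        rintro rfl
        exact Int.not_even_iff_odd.mpr ha hi₀
      rw [Pi.add_apply, Pi.single_eq_of_ne hi, add_zero]
      exact Or.inr (even_add_mul_self_of_odd ha (b i))

/-- Normalization of Seifert invariants: given coprime pairs `(aᵢ, bᵢ)` with all `aᵢ > 0`
and some `aᵢ` even, and an integer `b`, one can perform moves `bᵢ ↦ bᵢ + kᵢ aᵢ`,
`b ↦ b + Σ kᵢ` so that the new `b` is even and for every `i` at least one of
`aᵢ`, `bᵢ + kᵢ aᵢ` is even. -/
theorem seifert_even_normalization (n : ℕ) (hn : 1 ≤ n) (a b : Fin n → ℤ) (B : ℤ)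
    (hpos : ∀ i, 0 < a i) (hcop : ∀ i, IsCoprime (a i) (b i))
    (heven : ∃ i, Even (a i)) :
    ∃ k : Fin n → ℤ, Even (B + ∑ i, k i) ∧
      ∀ i, Even (a i) ∨ Even (b i + k i * a i) :=
  seifert_even_normalization_general n a b B heven
end
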